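/- Let Q be a generalised quadrangle with point-line incidence graph Γ and let C be a code in Γ with |C| ≥ 2, minimum distance δ = 4 and covering radius ρ. Then: (1) C is a partial ovoid or a partial spread of Q; (2) C is a maximal partial ovoid or a maximal partial spread of Q if and only if ρ ≤ 3; (3) C is an ovoid or a spread of Q if and only if ρ = 2. -/

import Mathlib

/-- A finite generalised quadrangle of order `(s,t)`: each point is on `t+1` lines,
each line has `s+1` points, two distinct points lie on at most one common line,
two distinct lines meet in at most one common point, and for each non-incident
point-line pair `(p, ℓ)` there is a unique pair `(q, M)` with `p I M`, `q I M`
and `q I ℓ`. -/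
structure GenQuad (P L : Type*) (s t : ℕ) where
  I : P → L → Prop
  point_deg : ∀ p : P, Nat.card {ℓ : L // I p ℓ} = t + 1
  line_deg : ∀ ℓ : L, Nat.card {p : P // I p ℓ} = s + 1
  points_one_line : ∀ p₁ p₂ : P, p₁ ≠ p₂ → ∀ ℓ₁ ℓ₂ : L,
    I p₁ ℓ₁ → I p₂ ℓ₁ → I p₁ ℓ₂ → I p₂ ℓ₂ → ℓ₁ = ℓ₂
  lines_one_point : ∀ ℓ₁ ℓ₂ : L, ℓ₁ ≠ ℓ₂ → ∀ p₁ p₂ : P,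
    I p₁ ℓ₁ → I p₁ ℓ₂ → I p₂ ℓ₁ → I p₂ ℓ₂ → p₁ = p₂
  gq_axiom : ∀ (p : P) (ℓ : L), ¬ I p ℓ →
    ∃! qM : P × L, I p qM.2 ∧ I qM.1 qM.2 ∧ I qM.1 ℓ

/-- The point-line incidence graph of a generalised quadrangle. -/
def incGraph {P L : Type*} {s t : ℕ} (Q : GenQuad P L s t) : SimpleGraph (P ⊕ L) where
  Adj x y :=
    (∃ p ℓ, x = Sum.inl p ∧ y = Sum.inr ℓ ∧ Q.I p ℓ) ∨
    (∃ p ℓ, x = Sum.inr ℓ ∧ y = Sum.inl p ∧ Q.I p ℓ)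
  symm := by
    constructor
    rintro x y (⟨p, ℓ, rfl, rfl, h⟩ | ⟨p, ℓ, rfl, rfl, h⟩)
    · exact Or.inr ⟨p, ℓ, rfl, rfl, h⟩
    · exact Or.inl ⟨p, ℓ, rfl, rfl, h⟩
  loopless := by
    constructor
    rintro x (⟨p, ℓ, rfl, h, -⟩ | ⟨p, ℓ, rfl, h, -⟩) <;> exact absurd h (by simp)

/-- The minimum distance of a code `C` in a graph `Γ`. -/
noncomputable def minDist {V : Type*} (Γ : SimpleGraph V) (C : Set V) : ℕ :=
  sInf {d | ∃ x ∈ C, ∃ y ∈ C, x ≠ y ∧ Γ.dist x y = d}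

/-- The distance from a vertex `γ` to a code `C`. -/
noncomputable def distToCode {V : Type*} (Γ : SimpleGraph V) (C : Set V) (γ : V) : ℕ :=
  sInf {d | ∃ x ∈ C, Γ.dist γ x = d}

/-- The covering radius of a code `C` in a graph `Γ`. -/
noncomputable def covRad {V : Type*} (Γ : SimpleGraph V) (C : Set V) : ℕ :=
  sSup {d | ∃ γ : V, distToCode Γ C γ = d}

/-- `nbhd Γ C i` is the set `C_i` of vertices at distance exactly `i` from `C`. -/
def nbhd {V : Type*} (Γ : SimpleGraph V) (C : Set V) (i : ℕ) : Set V :=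
  {γ | distToCode Γ C γ = i}

/-- `g` is an automorphism of the graph `Γ`. -/
def IsGraphAut {V : Type*} (Γ : SimpleGraph V) (g : V ≃ V) : Prop :=
  ∀ x y : V, Γ.Adj (g x) (g y) ↔ Γ.Adj x y

/-- `Aut(C)` (automorphisms of `Γ` preserving `C` setwise) acts transitively on `S`. -/
def TransOn {V : Type*} (Γ : SimpleGraph V) (C S : Set V) : Prop :=
  ∀ x ∈ S, ∀ y ∈ S, ∃ g : V ≃ V, IsGraphAut Γ g ∧ (∀ v, g v ∈ C ↔ v ∈ C) ∧ g x = y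

/-- `C` is neighbour-transitive: `Aut(C)` is transitive on `C` and on `C₁`. -/
def NeighbourTransitive {V : Type*} (Γ : SimpleGraph V) (C : Set V) : Prop :=
  TransOn Γ C C ∧ TransOn Γ C (nbhd Γ C 1)

variable {P L : Type*} {s t : ℕ}

/-- A partial ovoid: a set of point-vertices no two of which lie on a common line. -/
def IsPartialOvoid (Q : GenQuad P L s t) (C : Set (P ⊕ L)) : Prop :=
  (∀ x ∈ C, ∃ p : P, x = Sum.inl p) ∧
  ∀ p₁ p₂ : P, Sum.inl p₁ ∈ C → Sum.inl p₂ ∈ C → p₁ ≠ p₂ →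
    ∀ ℓ : L, ¬ (Q.I p₁ ℓ ∧ Q.I p₂ ℓ)

/-- A maximal partial ovoid: a partial ovoid not properly contained in a larger one. -/
def IsMaxPartialOvoid (Q : GenQuad P L s t) (C : Set (P ⊕ L)) : Prop :=
  IsPartialOvoid Q C ∧ ∀ C', IsPartialOvoid Q C' → C ⊆ C' → C' = C

/-- An ovoid: a set of point-vertices such that every line contains exactly one of them. -/
def IsOvoid (Q : GenQuad P L s t) (C : Set (P ⊕ L)) : Prop :=
  (∀ x ∈ C, ∃ p : P, x = Sum.inl p) ∧
  ∀ ℓ : L, ∃! p : P, Sum.inl p ∈ C ∧ Q.I p ℓ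

/-- A partial spread: a set of line-vertices no two of which pass through a common point. -/
def IsPartialSpread (Q : GenQuad P L s t) (C : Set (P ⊕ L)) : Prop :=
  (∀ x ∈ C, ∃ ℓ : L, x = Sum.inr ℓ) ∧
  ∀ ℓ₁ ℓ₂ : L, Sum.inr ℓ₁ ∈ C → Sum.inr ℓ₂ ∈ C → ℓ₁ ≠ ℓ₂ →
    ∀ p : P, ¬ (Q.I p ℓ₁ ∧ Q.I p ℓ₂)

/-- A maximal partial spread: a partial spread not properly contained in a larger one. -/
def IsMaxPartialSpread (Q : GenQuad P L s t) (C : Set (P ⊕ L)) : Prop :=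
  IsPartialSpread Q C ∧ ∀ C', IsPartialSpread Q C' → C ⊆ C' → C' = C

/-- A spread: a set of line-vertices such that every point lies on exactly one of them. -/
def IsSpread (Q : GenQuad P L s t) (C : Set (P ⊕ L)) : Prop :=
  (∀ x ∈ C, ∃ ℓ : L, x = Sum.inr ℓ) ∧
  ∀ p : P, ∃! ℓ : L, Sum.inr ℓ ∈ C ∧ Q.I p ℓ

/-!
The incidence graph is bipartite, and the quadrangle axiom pins down all of its distances: a
point and a line are at distance `1` or `3` according as they are incident or not, and two
distinct points are at distance `2` or `4` according as they are collinear or not. Hence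
minimum distance `4` forces `C` to consist of pairwise non-collinear points or, dually, of
pairwise non-concurrent lines. For a partial ovoid every line is within distance `3` of `C`,
and a point outside `C` is at distance `2` or `4` from `C` according as it is collinear with a
point of `C` or not; this gives maximality iff `ρ ≤ 3` and ovoid iff `ρ ≤ 2`, while a second
point on a line through a point of `C` (it exists as `s ≥ 1`) shows `ρ ≥ 2`. Partial spreads
are the partial ovoids of the dual quadrangle.
-/

open SimpleGraph Sum

namespace SimpleGraph

variable {V W : Type*} {G : SimpleGraph V} {G' : SimpleGraph W}

theorem Coloring.even_dist_iff_even_length (c : G.Coloring Bool) {u v : V} (w : G.Walk u v) :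
    Even (G.dist u v) ↔ Even w.length := by
  obtain ⟨w', hw'⟩ := w.reachable.exists_walk_length_eq_dist
  rw [← hw', c.even_length_iff_congr, c.even_length_iff_congr]

theorem Iso.dist_apply (e : G ≃g G') (u v : V) : G'.dist (e u) (e v) = G.dist u v := by
  by_cases huv : G.Reachable u v
  · obtain ⟨w, hw⟩ := huv.exists_walk_length_eq_dist
    obtain ⟨w', hw'⟩ := (e.reachable_iff.2 huv).exists_walk_length_eq_dist
    refine le_antisymm ?_ ?_
    · simpa [hw] using dist_le (w.map e.toHom)
    · simpa [hw'] using dist_le (w'.map e.symm.toHom)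
  · rw [dist_eq_zero_of_not_reachable huv,
      dist_eq_zero_of_not_reachable (mt e.reachable_iff.1 huv)]

end SimpleGraph

theorem Set.Nonempty.not_forall_inl_and_forall_inr {α β : Type*} {C : Set (α ⊕ β)}
    (hne : C.Nonempty) : ¬ ((∀ x ∈ C, ∃ a, x = Sum.inl a) ∧ ∀ x ∈ C, ∃ b, x = Sum.inr b) := by
  rintro ⟨hl, hr⟩
  obtain ⟨x, hx⟩ := hne
  obtain ⟨a, rfl⟩ := hl x hx
  simpa using hr _ hx

section Codes

variable {V W : Type*} {Γ : SimpleGraph V} {Γ' : SimpleGraph W} {C : Set V}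

theorem minDist_le_dist {x y : V} (hx : x ∈ C) (hy : y ∈ C) (hxy : x ≠ y) :
    minDist Γ C ≤ Γ.dist x y :=
  Nat.sInf_le ⟨x, hx, y, hy, hxy, rfl⟩

theorem nonempty_of_minDist_ne_zero (h : minDist Γ C ≠ 0) : C.Nonempty := by
  contrapose! h
  simp [minDist, h]

theorem distToCode_le_dist (γ : V) {x : V} (hx : x ∈ C) : distToCode Γ C γ ≤ Γ.dist γ x :=
  Nat.sInf_le ⟨x, hx, rfl⟩

theorem exists_dist_eq_distToCode (hC : C.Nonempty) (γ : V) :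
    ∃ x ∈ C, Γ.dist γ x = distToCode Γ C γ :=
  Nat.sInf_mem (hC.image (Γ.dist γ))

theorem distToCode_eq_zero_of_mem {γ : V} (hγ : γ ∈ C) : distToCode Γ C γ = 0 :=
  Nat.le_zero.1 <| (distToCode_le_dist γ hγ).trans_eq Γ.dist_self

theorem covRad_eq_iSup : covRad Γ C = ⨆ γ, distToCode Γ C γ := rfl

-- `covRad` is an `sSup` in `ℕ`, which is `0` on unbounded sets: hence the bound `m`.
theorem covRad_le_iff {m n : ℕ} (hm : ∀ γ, distToCode Γ C γ ≤ m) :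
    covRad Γ C ≤ n ↔ ∀ γ, distToCode Γ C γ ≤ n :=
  ciSup_le_iff' ⟨m, Set.forall_mem_range.2 hm⟩

theorem distToCode_le_covRad {m : ℕ} (hm : ∀ γ, distToCode Γ C γ ≤ m) (γ : V) :
    distToCode Γ C γ ≤ covRad Γ C :=
  le_ciSup ⟨m, Set.forall_mem_range.2 hm⟩ γ

section Iso

variable (e : Γ ≃g Γ') (D : Set W)

theorem distToCode_preimage (γ : V) : distToCode Γ (e ⁻¹' D) γ = distToCode Γ' D (e γ) := by
  simp only [distToCode, Set.mem_preimage, ← e.dist_apply γ]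
  congr 1
  ext d
  exact ⟨fun ⟨x, hx, hd⟩ => ⟨e x, hx, hd⟩,
    fun ⟨y, hy, hd⟩ => ⟨e.symm y, by simpa using hy, by simpa using hd⟩⟩

theorem covRad_preimage : covRad Γ (e ⁻¹' D) = covRad Γ' D := by
  simp only [covRad_eq_iSup, distToCode_preimage]
  exact e.toEquiv.iSup_comp (g := distToCode Γ' D)

theorem minDist_preimage : minDist Γ (e ⁻¹' D) = minDist Γ' D := by
  simp only [minDist, Set.mem_preimage]
  congr 1
  ext d
  constructor
  · rintro ⟨x, hx, y, hy, hxy, rfl⟩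
    exact ⟨e x, hx, e y, hy, e.injective.ne hxy, e.dist_apply x y⟩
  · rintro ⟨x, hx, y, hy, hxy, rfl⟩
    refine ⟨e.symm x, by simpa using hx, e.symm y, by simpa using hy, by simpa using hxy, ?_⟩
    simpa using (e.dist_apply (e.symm x) (e.symm y)).symm

end Iso

end Codes

namespace GenQuad

variable (Q : GenQuad P L s t) {C : Set (P ⊕ L)} {p p₀ q : P} {ℓ : L}

@[simp]
theorem incGraph_adj_inl_inr : (incGraph Q).Adj (inl p) (inr ℓ) ↔ Q.I p ℓ := by
  simp [incGraph]

@[simp]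
theorem incGraph_adj_inr_inl : (incGraph Q).Adj (inr ℓ) (inl p) ↔ Q.I p ℓ := by
  simp [incGraph]

@[simp]
theorem not_incGraph_adj_inl_inl : ¬ (incGraph Q).Adj (inl p) (inl q) := by
  simp [incGraph]

def isLeftColoring : (incGraph Q).Coloring Bool :=
  Coloring.mk Sum.isLeft <| by
    rintro _ _ (⟨p, ℓ, rfl, rfl, -⟩ | ⟨p, ℓ, rfl, rfl, -⟩) <;> simp

theorem exists_incident (p : P) : ∃ ℓ, Q.I p ℓ := by
  have hcard : 0 < Nat.card {ℓ // Q.I p ℓ} := by rw [Q.point_deg]; omega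
  obtain ⟨⟨ℓ, h⟩⟩ := (Nat.card_pos_iff.1 hcard).1
  exact ⟨ℓ, h⟩

theorem exists_ne_incident (hs : 1 ≤ s) (hp : Q.I p ℓ) : ∃ q, q ≠ p ∧ Q.I q ℓ := by
  have hcard : 1 < Nat.card {q // Q.I q ℓ} := by rw [Q.line_deg]; omega
  have := Nat.finite_of_card_ne_zero (by omega : Nat.card {q // Q.I q ℓ} ≠ 0)
  have := Finite.one_lt_card_iff_nontrivial.1 hcard
  obtain ⟨q, hq⟩ := exists_ne (⟨p, hp⟩ : {q // Q.I q ℓ})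
  exact ⟨q.1, fun h => hq (Subtype.ext h), q.2⟩

theorem dist_inl_inr_of_incident (h : Q.I p ℓ) : (incGraph Q).dist (inl p) (inr ℓ) = 1 :=
  dist_eq_one_iff_adj.2 <| (Q.incGraph_adj_inl_inr).2 h

theorem dist_inl_inr_of_not_incident (h : ¬ Q.I p ℓ) : (incGraph Q).dist (inl p) (inr ℓ) = 3 := by
  obtain ⟨⟨q, M⟩, ⟨hpM, hqM, hqℓ⟩, -⟩ := Q.gq_axiom p ℓ h
  let w : (incGraph Q).Walk (inl p) (inr ℓ) :=
    .cons ((Q.incGraph_adj_inl_inr).2 hpM) <| .cons ((Q.incGraph_adj_inr_inl).2 hqM) <|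
      .cons ((Q.incGraph_adj_inl_inr).2 hqℓ) .nil
  have hle : (incGraph Q).dist (inl p) (inr ℓ) ≤ 3 := dist_le w
  have hodd := (Q.isLeftColoring.even_dist_iff_even_length w).not.2 (by decide : ¬ Even 3)
  have hne : (incGraph Q).dist (inl p) (inr ℓ) ≠ 1 := by
    rwa [Ne, dist_eq_one_iff_adj, incGraph_adj_inl_inr]
  rw [Nat.not_even_iff_odd, Nat.odd_iff] at hodd
  omega

theorem dist_inl_inr_le_three (p : P) (ℓ : L) : (incGraph Q).dist (inl p) (inr ℓ) ≤ 3 := by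
  by_cases h : Q.I p ℓ
  · simp [Q.dist_inl_inr_of_incident h]
  · simp [Q.dist_inl_inr_of_not_incident h]

theorem dist_inl_inl_of_collinear (hpq : p ≠ q) (hp : Q.I p ℓ) (hq : Q.I q ℓ) :
    (incGraph Q).dist (inl p) (inl q) = 2 := by
  let w : (incGraph Q).Walk (inl p) (inl q) :=
    .cons ((Q.incGraph_adj_inl_inr).2 hp) <| .cons ((Q.incGraph_adj_inr_inl).2 hq) .nil
  have hle : (incGraph Q).dist (inl p) (inl q) ≤ 2 := dist_le w
  have heven := (Q.isLeftColoring.even_dist_iff_even_length w).2 (by decide : Even 2)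
  have hne : (incGraph Q).dist (inl p) (inl q) ≠ 0 := by
    rw [Ne, w.reachable.dist_eq_zero_iff, inl.injEq]
    exact hpq
  rw [Nat.even_iff] at heven
  omega

theorem dist_inl_inl_of_not_collinear (h : ∀ ℓ, ¬ (Q.I p ℓ ∧ Q.I q ℓ)) :
    (incGraph Q).dist (inl p) (inl q) = 4 := by
  obtain ⟨ℓ, hqℓ⟩ := Q.exists_incident q
  have hpℓ : ¬ Q.I p ℓ := fun hpℓ => h ℓ ⟨hpℓ, hqℓ⟩
  obtain ⟨⟨r, M⟩, ⟨hpM, hrM, hrℓ⟩, -⟩ := Q.gq_axiom p ℓ hpℓ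
  let w : (incGraph Q).Walk (inl p) (inl q) :=
    .cons ((Q.incGraph_adj_inl_inr).2 hpM) <| .cons ((Q.incGraph_adj_inr_inl).2 hrM) <|
      .cons ((Q.incGraph_adj_inl_inr).2 hrℓ) <| .cons ((Q.incGraph_adj_inr_inl).2 hqℓ) .nil
  have hle : (incGraph Q).dist (inl p) (inl q) ≤ 4 := dist_le w
  have heven := (Q.isLeftColoring.even_dist_iff_even_length w).2 (by decide : Even 4)
  have hne0 : (incGraph Q).dist (inl p) (inl q) ≠ 0 := by
    rw [Ne, w.reachable.dist_eq_zero_iff, inl.injEq]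
    rintro rfl
    exact hpℓ hqℓ
  have hne2 : (incGraph Q).dist (inl p) (inl q) ≠ 2 := by
    intro h2
    obtain ⟨-, -, z, hz⟩ := edist_eq_two_iff.1 (by rw [← w.reachable.coe_dist_eq_edist, h2]; rfl)
    rw [mem_commonNeighbors] at hz
    rcases z with r | m
    · exact Q.not_incGraph_adj_inl_inl hz.1
    · exact h m ⟨(Q.incGraph_adj_inl_inr).1 hz.1, (Q.incGraph_adj_inl_inr).1 hz.2⟩
  rw [Nat.even_iff] at heven
  omega

theorem dist_inl_le_four (x : P ⊕ L) (p : P) : (incGraph Q).dist x (inl p) ≤ 4 := by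
  rcases x with q | ℓ
  · by_cases hqp : q = p
    · simp [hqp]
    by_cases h : ∃ ℓ, Q.I q ℓ ∧ Q.I p ℓ
    · obtain ⟨ℓ, hq, hp⟩ := h
      simp [Q.dist_inl_inl_of_collinear hqp hq hp]
    · push Not at h
      simp [Q.dist_inl_inl_of_not_collinear fun ℓ hℓ => h ℓ hℓ.1 hℓ.2]
  · rw [dist_comm]
    exact (Q.dist_inl_inr_le_three p ℓ).trans (by norm_num)

theorem forall_inl_or_forall_inr_of_four_le_minDist (hδ : 4 ≤ minDist (incGraph Q) C) :
    (∀ x ∈ C, ∃ p, x = inl p) ∨ (∀ x ∈ C, ∃ ℓ, x = inr ℓ) := by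
  have hmixed (p : P) (ℓ : L) (hp : inl p ∈ C) (hℓ : inr ℓ ∈ C) : False := by
    have := (minDist_le_dist hp hℓ inl_ne_inr).trans (Q.dist_inl_inr_le_three p ℓ)
    omega
  rcases C.eq_empty_or_nonempty with rfl | ⟨p₀ | ℓ₀, hx₀⟩
  · simp
  · left
    rintro (p | ℓ) hx
    exacts [⟨p, rfl⟩, (hmixed p₀ ℓ hx₀ hx).elim]
  · right
    rintro (p | ℓ) hx
    exacts [(hmixed p ℓ₀ hx hx₀).elim, ⟨ℓ, rfl⟩]

theorem isPartialOvoid_of_four_le_minDist (hP : ∀ x ∈ C, ∃ p, x = inl p)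
    (hδ : 4 ≤ minDist (incGraph Q) C) : IsPartialOvoid Q C := by
  refine ⟨hP, fun p q hp hq hpq ℓ ⟨hpℓ, hqℓ⟩ => ?_⟩
  have := hδ.trans (minDist_le_dist hp hq (inl_injective.ne hpq))
  rw [Q.dist_inl_inl_of_collinear hpq hpℓ hqℓ] at this
  omega

theorem distToCode_inr_le_three (hp₀ : inl p₀ ∈ C) (ℓ : L) :
    distToCode (incGraph Q) C (inr ℓ) ≤ 3 :=
  (distToCode_le_dist _ hp₀).trans <| dist_comm.trans_le (Q.dist_inl_inr_le_three p₀ ℓ)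

theorem distToCode_le_four (hp₀ : inl p₀ ∈ C) (γ : P ⊕ L) : distToCode (incGraph Q) C γ ≤ 4 :=
  (distToCode_le_dist γ hp₀).trans (Q.dist_inl_le_four γ p₀)

theorem exists_dist_inl_eq_distToCode (hP : ∀ x ∈ C, ∃ p, x = inl p) (hne : C.Nonempty) (p : P) :
    ∃ q, inl q ∈ C ∧ (incGraph Q).dist (inl p) (inl q) = distToCode (incGraph Q) C (inl p) := by
  obtain ⟨x, hx, hd⟩ := exists_dist_eq_distToCode hne (inl p)
  obtain ⟨q, rfl⟩ := hP x hx
  exact ⟨q, hx, hd⟩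

theorem dist_inl_inl_le_three_iff (hpq : p ≠ q) :
    (incGraph Q).dist (inl p) (inl q) ≤ 3 ↔ ∃ ℓ, Q.I p ℓ ∧ Q.I q ℓ := by
  refine ⟨fun h => ?_, fun ⟨ℓ, hp, hq⟩ => (Q.dist_inl_inl_of_collinear hpq hp hq).trans_le ?_⟩
  · by_contra! hfar
    rw [Q.dist_inl_inl_of_not_collinear fun ℓ hℓ => hfar ℓ hℓ.1 hℓ.2] at h
    omega
  · norm_num

theorem two_le_dist_inl_inl (hpq : p ≠ q) : 2 ≤ (incGraph Q).dist (inl p) (inl q) := by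
  by_cases h : ∃ ℓ, Q.I p ℓ ∧ Q.I q ℓ
  · obtain ⟨ℓ, hp, hq⟩ := h
    rw [Q.dist_inl_inl_of_collinear hpq hp hq]
  · have := (Q.dist_inl_inl_le_three_iff hpq).not.2 h
    omega

end GenQuad

section PartialOvoid

variable {Q : GenQuad P L s t} {C : Set (P ⊕ L)} {p : P}

theorem IsPartialOvoid.insert (hC : IsPartialOvoid Q C)
    (hp : ∀ q, inl q ∈ C → ∀ ℓ, Q.I p ℓ → ¬ Q.I q ℓ) : IsPartialOvoid Q (insert (inl p) C) := by
  refine ⟨?_, ?_⟩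
  · rintro x (rfl | hx)
    exacts [⟨p, rfl⟩, hC.1 x hx]
  · rintro p₁ p₂ (h₁ | h₁) (h₂ | h₂) hne ℓ ⟨hℓ₁, hℓ₂⟩
    · exact hne (inl_injective (h₁.trans h₂.symm))
    · cases h₁
      exact hp p₂ h₂ ℓ hℓ₁ hℓ₂
    · cases h₂
      exact hp p₁ h₁ ℓ hℓ₂ hℓ₁
    · exact hC.2 p₁ p₂ h₁ h₂ hne ℓ ⟨hℓ₁, hℓ₂⟩

theorem isMaxPartialOvoid_iff : IsMaxPartialOvoid Q C ↔
    IsPartialOvoid Q C ∧ ∀ p, inl p ∉ C → ∃ q, inl q ∈ C ∧ ∃ ℓ, Q.I p ℓ ∧ Q.I q ℓ := by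
  refine and_congr_right fun hC => ⟨fun hmax p hp => ?_, fun hcov D hD hCD => ?_⟩
  · by_contra! hfar
    exact hp (hmax _ (hC.insert hfar) (Set.subset_insert _ _) ▸ Set.mem_insert _ _)
  · refine (Set.Subset.antisymm (fun x hx => ?_) hCD)
    obtain ⟨p, rfl⟩ := hD.1 x hx
    by_contra hp
    obtain ⟨q, hq, ℓ, hpℓ, hqℓ⟩ := hcov p hp
    exact hD.2 p q hx (hCD hq) (by rintro rfl; exact hp hq) ℓ ⟨hpℓ, hqℓ⟩

theorem IsPartialOvoid.exists_inl_mem (hC : IsPartialOvoid Q C) (hne : C.Nonempty) :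
    ∃ p, inl p ∈ C := by
  obtain ⟨x, hx⟩ := hne
  obtain ⟨p, rfl⟩ := hC.1 x hx
  exact ⟨p, hx⟩

theorem IsPartialOvoid.distToCode_inl_le_three_iff (hC : IsPartialOvoid Q C) (hne : C.Nonempty)
    (hp : inl p ∉ C) :
    distToCode (incGraph Q) C (inl p) ≤ 3 ↔ ∃ q, inl q ∈ C ∧ ∃ ℓ, Q.I p ℓ ∧ Q.I q ℓ := by
  refine ⟨fun h => ?_, fun ⟨q, hq, hcol⟩ => ?_⟩
  · obtain ⟨q, hq, hd⟩ := Q.exists_dist_inl_eq_distToCode hC.1 hne p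
    have hpq : p ≠ q := by rintro rfl; exact hp hq
    exact ⟨q, hq, (Q.dist_inl_inl_le_three_iff hpq).1 (hd.trans_le h)⟩
  · have hpq : p ≠ q := by rintro rfl; exact hp hq
    exact (distToCode_le_dist _ hq).trans ((Q.dist_inl_inl_le_three_iff hpq).2 hcol)

theorem IsPartialOvoid.isMaxPartialOvoid_iff_covRad_le_three (hC : IsPartialOvoid Q C)
    (hne : C.Nonempty) : IsMaxPartialOvoid Q C ↔ covRad (incGraph Q) C ≤ 3 := by
  obtain ⟨p₀, hp₀⟩ := hC.exists_inl_mem hne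
  rw [isMaxPartialOvoid_iff, covRad_le_iff (Q.distToCode_le_four hp₀), Sum.forall,
    and_iff_right hC, and_iff_left (Q.distToCode_inr_le_three hp₀)]
  refine forall_congr' fun p => ?_
  by_cases hp : inl p ∈ C
  · simp [hp, distToCode_eq_zero_of_mem hp]
  · simp only [hp, not_false_eq_true, forall_const]
    exact (hC.distToCode_inl_le_three_iff hne hp).symm

theorem IsPartialOvoid.isOvoid_iff_forall_distToCode_le_two (hC : IsPartialOvoid Q C)
    (hne : C.Nonempty) : IsOvoid Q C ↔ ∀ γ, distToCode (incGraph Q) C γ ≤ 2 := by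
  refine ⟨fun ⟨_, hcov⟩ => ?_, fun h => ⟨hC.1, fun ℓ => ?_⟩⟩
  · rintro (p | ℓ)
    · by_cases hp : inl p ∈ C
      · simp [distToCode_eq_zero_of_mem hp]
      obtain ⟨ℓ, hpℓ⟩ := Q.exists_incident p
      obtain ⟨q, ⟨hq, hqℓ⟩, -⟩ := hcov ℓ
      have hpq : p ≠ q := by rintro rfl; exact hp hq
      exact (distToCode_le_dist _ hq).trans (Q.dist_inl_inl_of_collinear hpq hpℓ hqℓ).le
    · obtain ⟨q, ⟨hq, hqℓ⟩, -⟩ := hcov ℓ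
      refine (distToCode_le_dist _ hq).trans ?_
      rw [dist_comm, Q.dist_inl_inr_of_incident hqℓ]
      norm_num
  · obtain ⟨x, hx, hd⟩ := exists_dist_eq_distToCode hne (inr ℓ)
    obtain ⟨q, rfl⟩ := hC.1 x hx
    have hqℓ : Q.I q ℓ := by
      by_contra hqℓ
      have := hd.trans_le (h (inr ℓ))
      rw [dist_comm, Q.dist_inl_inr_of_not_incident hqℓ] at this
      omega
    refine ⟨q, ⟨hx, hqℓ⟩, fun q' ⟨hq', hq'ℓ⟩ => ?_⟩
    by_contra hne
    exact hC.2 q' q hq' hx hne ℓ ⟨hq'ℓ, hqℓ⟩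

theorem IsPartialOvoid.two_le_covRad (hs : 1 ≤ s) (hC : IsPartialOvoid Q C) (hne : C.Nonempty) :
    2 ≤ covRad (incGraph Q) C := by
  obtain ⟨p₀, hp₀⟩ := hC.exists_inl_mem hne
  obtain ⟨ℓ, hp₀ℓ⟩ := Q.exists_incident p₀
  obtain ⟨p, hpp₀, hpℓ⟩ := Q.exists_ne_incident hs hp₀ℓ
  have hp : inl p ∉ C := fun hp => hC.2 p p₀ hp hp₀ hpp₀ ℓ ⟨hpℓ, hp₀ℓ⟩
  obtain ⟨q, hq, hd⟩ := Q.exists_dist_inl_eq_distToCode hC.1 hne p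
  have hpq : p ≠ q := by rintro rfl; exact hp hq
  calc 2 ≤ (incGraph Q).dist (inl p) (inl q) := Q.two_le_dist_inl_inl hpq
    _ = distToCode (incGraph Q) C (inl p) := hd
    _ ≤ covRad (incGraph Q) C := distToCode_le_covRad (Q.distToCode_le_four hp₀) _

theorem IsPartialOvoid.isOvoid_iff_covRad_eq_two (hs : 1 ≤ s) (hC : IsPartialOvoid Q C)
    (hne : C.Nonempty) : IsOvoid Q C ↔ covRad (incGraph Q) C = 2 := by
  obtain ⟨p₀, hp₀⟩ := hC.exists_inl_mem hne
  rw [hC.isOvoid_iff_forall_distToCode_le_two hne, ← covRad_le_iff (Q.distToCode_le_four hp₀)]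
  have := hC.two_le_covRad hs hne
  constructor <;> intro <;> omega

end PartialOvoid

namespace GenQuad

variable (Q : GenQuad P L s t)

def dual : GenQuad L P t s where
  I ℓ p := Q.I p ℓ
  point_deg := Q.line_deg
  line_deg := Q.point_deg
  points_one_line := Q.lines_one_point
  lines_one_point := Q.points_one_line
  gq_axiom ℓ p h := by
    obtain ⟨⟨q, M⟩, ⟨hpM, hqM, hqℓ⟩, huniq⟩ := Q.gq_axiom p ℓ h
    refine ⟨(M, q), ⟨hqℓ, hqM, hpM⟩, fun ⟨M', q'⟩ ⟨hq'ℓ, hq'M', hpM'⟩ => ?_⟩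
    cases huniq (q', M') ⟨hpM', hq'M', hq'ℓ⟩
    rfl

def incGraphDualIso : incGraph Q.dual ≃g incGraph Q where
  toEquiv := Equiv.sumComm L P
  map_rel_iff' := by rintro (ℓ | p) (m | q) <;> simp [incGraph, dual]

variable {Q} {C : Set (P ⊕ L)}

theorem minDist_dual : minDist (incGraph Q.dual) (Sum.swap ⁻¹' C) = minDist (incGraph Q) C :=
  minDist_preimage Q.incGraphDualIso C

theorem covRad_dual : covRad (incGraph Q.dual) (Sum.swap ⁻¹' C) = covRad (incGraph Q) C :=
  covRad_preimage Q.incGraphDualIso C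

theorem isPartialSpread_iff_dual :
    IsPartialSpread Q C ↔ IsPartialOvoid Q.dual (Sum.swap ⁻¹' C) := by
  simp [IsPartialSpread, IsPartialOvoid, Sum.forall, dual]

theorem isSpread_iff_dual : IsSpread Q C ↔ IsOvoid Q.dual (Sum.swap ⁻¹' C) := by
  simp [IsSpread, IsOvoid, Sum.forall, dual]

theorem isMaxPartialSpread_iff_dual :
    IsMaxPartialSpread Q C ↔ IsMaxPartialOvoid Q.dual (Sum.swap ⁻¹' C) := by
  simp only [IsMaxPartialSpread, IsMaxPartialOvoid, isPartialSpread_iff_dual]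
  refine and_congr_right fun _ => ⟨fun h D hD hCD => ?_, fun h D hD hCD => ?_⟩
  · have hDD : Sum.swap ⁻¹' (Sum.swap ⁻¹' D) = D := by ext; simp
    have := h (Sum.swap ⁻¹' D) (by rwa [hDD]) (fun x hx => hCD (by simpa using hx))
    rw [← this, hDD]
  · exact Set.preimage_injective.2 Sum.swap_rightInverse.surjective (h _ hD (Set.preimage_mono hCD))

theorem isPartialSpread_of_four_le_minDist (hL : ∀ x ∈ C, ∃ ℓ, x = inr ℓ)
    (hδ : 4 ≤ minDist (incGraph Q) C) : IsPartialSpread Q C := by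
  rw [isPartialSpread_iff_dual]
  refine Q.dual.isPartialOvoid_of_four_le_minDist (fun x hx => ?_) (by rwa [minDist_dual])
  obtain ⟨ℓ, hℓ⟩ := hL _ hx
  exact ⟨ℓ, by simpa using congrArg Sum.swap hℓ⟩

end GenQuad

section PartialSpread

variable {Q : GenQuad P L s t} {C : Set (P ⊕ L)}

theorem IsPartialSpread.isMaxPartialSpread_iff_covRad_le_three (hC : IsPartialSpread Q C)
    (hne : C.Nonempty) : IsMaxPartialSpread Q C ↔ covRad (incGraph Q) C ≤ 3 := by
  rw [GenQuad.isMaxPartialSpread_iff_dual, ← GenQuad.covRad_dual]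
  exact (GenQuad.isPartialSpread_iff_dual.1 hC).isMaxPartialOvoid_iff_covRad_le_three
    (hne.preimage Sum.swap_rightInverse.surjective)

theorem IsPartialSpread.isSpread_iff_covRad_eq_two (ht : 1 ≤ t) (hC : IsPartialSpread Q C)
    (hne : C.Nonempty) : IsSpread Q C ↔ covRad (incGraph Q) C = 2 := by
  rw [GenQuad.isSpread_iff_dual, ← GenQuad.covRad_dual]
  exact (GenQuad.isPartialSpread_iff_dual.1 hC).isOvoid_iff_covRad_eq_two ht
    (hne.preimage Sum.swap_rightInverse.surjective)

end PartialSpread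

theorem stmt4_general
    (Q : GenQuad P L s t) (hs : 1 ≤ s) (ht : 1 ≤ t)
    (C : Set (P ⊕ L))
    (hδ : minDist (incGraph Q) C = 4) :
    (IsPartialOvoid Q C ∨ IsPartialSpread Q C) ∧
    ((IsMaxPartialOvoid Q C ∨ IsMaxPartialSpread Q C) ↔ covRad (incGraph Q) C ≤ 3) ∧
    ((IsOvoid Q C ∨ IsSpread Q C) ↔ covRad (incGraph Q) C = 2) := by
  have hne : C.Nonempty := nonempty_of_minDist_ne_zero (Γ := incGraph Q) (by omega)
  rcases Q.forall_inl_or_forall_inr_of_four_le_minDist hδ.ge with hP | hL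
  · have hnL : ¬ ∀ x ∈ C, ∃ ℓ, x = inr ℓ := fun hL => hne.not_forall_inl_and_forall_inr ⟨hP, hL⟩
    have hO := Q.isPartialOvoid_of_four_le_minDist hP hδ.ge
    simp only [IsMaxPartialSpread, IsPartialSpread, IsSpread, hnL, false_and, or_false]
    exact ⟨hO, hO.isMaxPartialOvoid_iff_covRad_le_three hne, hO.isOvoid_iff_covRad_eq_two hs hne⟩
  · have hnP : ¬ ∀ x ∈ C, ∃ p, x = inl p := fun hP => hne.not_forall_inl_and_forall_inr ⟨hP, hL⟩
    have hS := Q.isPartialSpread_of_four_le_minDist hL hδ.ge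
    simp only [IsMaxPartialOvoid, IsPartialOvoid, IsOvoid, hnP, false_and, false_or]
    exact ⟨hS, hS.isMaxPartialSpread_iff_covRad_le_three hne, hS.isSpread_iff_covRad_eq_two ht hne⟩

/-- A code with minimum distance `4` is a partial ovoid or partial spread;
it is maximal iff `ρ ≤ 3`, and an ovoid or spread iff `ρ = 2`. -/
theorem stmt4 [Finite P] [Finite L]
    (Q : GenQuad P L s t) (hs : 1 ≤ s) (ht : 1 ≤ t)
    (C : Set (P ⊕ L)) (hC2 : 2 ≤ C.ncard)
    (hδ : minDist (incGraph Q) C = 4) :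
    (IsPartialOvoid Q C ∨ IsPartialSpread Q C) ∧
    ((IsMaxPartialOvoid Q C ∨ IsMaxPartialSpread Q C) ↔ covRad (incGraph Q) C ≤ 3) ∧
    ((IsOvoid Q C ∨ IsSpread Q C) ↔ covRad (incGraph Q) C = 2) :=
  stmt4_general Q hs ht C hδ
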